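/- In minimal propositional logic, given a truth operator T satisfying the axiom scheme A → T(A) and the scheme T(A) ∧ T(B) → T(A ∧ B), and the scheme T(A ∧ ¬A) → T(⊥), if S is a proposition with S ↔ T(¬S) derivable, then S → T(⊥) is derivable. -/
import Mathlib

/-- Propositional formulas built from variables and ⊥ using ∧, ∨, →. -/
inductive Fm : Type
  | var : ℕ → Fm
  | bot : Fm
  | and : Fm → Fm → Fm
  | or : Fm → Fm → Fm
  | imp : Fm → Fm → Fm
deriving DecidableEq

/-- ¬A is defined as A → ⊥. -/
def Fm.neg (A : Fm) : Fm := A.imp .bot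

/-- Hilbert-style derivability in minimal propositional logic (intuitionistic
logic without ex falso quodlibet), extended by an extra set `Ax` of axioms. -/
inductive Deriv (Ax : Fm → Prop) : Fm → Prop
  | ax {A} : Ax A → Deriv Ax A
  | k (A B : Fm) : Deriv Ax (A.imp (B.imp A))
  | s (A B C : Fm) : Deriv Ax ((A.imp (B.imp C)).imp ((A.imp B).imp (A.imp C)))
  | andI (A B : Fm) : Deriv Ax (A.imp (B.imp (A.and B)))
  | andE1 (A B : Fm) : Deriv Ax ((A.and B).imp A)
  | andE2 (A B : Fm) : Deriv Ax ((A.and B).imp B)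
  | orI1 (A B : Fm) : Deriv Ax (A.imp (A.or B))
  | orI2 (A B : Fm) : Deriv Ax (B.imp (A.or B))
  | orE (A B C : Fm) : Deriv Ax ((A.imp C).imp ((B.imp C).imp ((A.or B).imp C)))
  | mp {A B : Fm} : Deriv Ax (A.imp B) → Deriv Ax A → Deriv Ax B

/-- Composition: from B→C and A→B derive A→C. -/
lemma Deriv.comp {Ax : Fm → Prop} {A B C : Fm}
    (h1 : Deriv Ax (B.imp C)) (h2 : Deriv Ax (A.imp B)) : Deriv Ax (A.imp C) :=
  Deriv.mp (Deriv.mp (Deriv.s A B C) (Deriv.mp (Deriv.k (B.imp C) A) h1)) h2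

/-- Pairing: from A→X and A→Y derive A→X∧Y. -/
lemma Deriv.pair {Ax : Fm → Prop} {A X Y : Fm}
    (h1 : Deriv Ax (A.imp X)) (h2 : Deriv Ax (A.imp Y)) :
    Deriv Ax (A.imp (X.and Y)) :=
  Deriv.mp (Deriv.mp (Deriv.s A Y (X.and Y)) (Deriv.comp (Deriv.andI X Y) h1)) h2

/-- with schemes A → T(A), T(A) ∧ T(B) → T(A ∧ B),
T(A ∧ ¬A) → T(⊥), and a liar proposition S with S ↔ T(¬S) derivable,
S → T(⊥) is derivable. -/
theorem stmt0 (T : Fm → Fm) (Ax : Fm → Prop)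
    (hT1 : ∀ A : Fm, Deriv Ax (A.imp (T A)))
    (hT2 : ∀ A B : Fm, Deriv Ax (((T A).and (T B)).imp (T (A.and B))))
    (hT3 : ∀ A : Fm, Deriv Ax ((T (A.and A.neg)).imp (T .bot)))
    (S : Fm)
    (hS1 : Deriv Ax (S.imp (T S.neg)))
    (hS2 : Deriv Ax ((T S.neg).imp S)) :
    Deriv Ax (S.imp (T .bot)) := by
  have hSTS : Deriv Ax (S.imp ((T S).and (T S.neg))) :=
    Deriv.pair (hT1 S) hS1
  exact Deriv.comp (hT3 S) (Deriv.comp (hT2 S S.neg) hSTS)
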